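/- Suppose the pair of sequences {(x^{(t)}, y^{(t)})}_{t≥0} follows Algorithm Class 2 on the splitting reformulation (SP) of instance 𝒫 with x^{(0)} = 0 and y^{(0)} = 0. Write x^{(t)} in blocks (x₁^{(t)},…,x_m^{(t)}) with x_i^{(t)} ∈ ℝ^{d̄} and y^{(t)} in blocks (y₁^{(t)},…,y_{3m₂−1}^{(t)}) with y_j^{(t)} ∈ ℝ^{d̄}. Then for every j̄ ∈ {2,3,…,d̄}: supp(x_i^{(t)}) ⊆ {1,…,j̄−1} for all i = 1,…,m and supp(y_j^{(t)}) ⊆ {1,…,j̄−1} for all j = 1,…,3m₂−1, whenever t ≤ 1 + m·(j̄−2)/3. -/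

import Mathlib

open Real Matrix Finset
open scoped Kronecker

noncomputable section

def Psi (u : ℝ) : ℝ := if u ≤ 0 then 0 else 1 - Real.exp (-u ^ 2)
def Phi (v : ℝ) : ℝ := 4 * Real.arctan v + 2 * π
def zc {d : ℕ} (z : EuclideanSpace ℝ (Fin d)) (j : ℕ) : ℝ :=
  if h : 1 ≤ j ∧ j - 1 < d then z ⟨j - 1, h.2⟩ else 0
def phi {d : ℕ} (z : EuclideanSpace ℝ (Fin d)) (j : ℕ) : ℝ :=
  if j = 1 then -(Psi 1 * Phi (zc z 1))
  else Psi (-zc z (j - 1)) * Phi (-zc z j) - Psi (zc z (j - 1)) * Phi (zc z j)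
def hfun (m i : ℕ) {d : ℕ} (z : EuclideanSpace ℝ (Fin d)) : ℝ :=
  if i ≤ m / 3 then phi z 1 + 3 * ∑ j ∈ Finset.Icc 1 (d / 2), phi z (2 * j)
  else if i ≤ 2 * m / 3 then phi z 1
  else phi z 1 + 3 * ∑ j ∈ Finset.Icc 1 (d / 2), phi z (2 * j + 1)
def ff (m : ℕ) (Lf ε : ℝ) (i : ℕ) {d : ℕ} (z : EuclideanSpace ℝ (Fin d)) : ℝ :=
  300 * π * ε ^ 2 / (m * Lf) * hfun m i ((Real.sqrt m * Lf / (150 * π * ε)) • z)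
def blkN {m d : ℕ} (x : EuclideanSpace ℝ (Fin m × Fin d)) (i : ℕ) :
    EuclideanSpace ℝ (Fin d) :=
  WithLp.toLp 2 (fun j => if h : 1 ≤ i ∧ i - 1 < m then x (⟨i - 1, h.2⟩, j) else 0)
def f0 (m : ℕ) (Lf ε : ℝ) {d : ℕ} (x : EuclideanSpace ℝ (Fin m × Fin d)) : ℝ :=
  ∑ i ∈ Finset.Icc 1 m, ff m Lf ε i (blkN x i)
def l1norm {ι : Type*} [Fintype ι] (x : ι → ℝ) : ℝ := ∑ i, |x i|
def Jmat (p : ℕ) : Matrix (Fin (p - 1)) (Fin p) ℝ :=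
  Matrix.of fun i j => if j.val = i.val then -1 else if j.val = i.val + 1 then 1 else 0
def Hmat (m d : ℕ) (Lf : ℝ) : Matrix (Fin (m - 1) × Fin d) (Fin m × Fin d) ℝ :=
  ((m : ℝ) * Lf) • (Jmat m ⊗ₖ (1 : Matrix (Fin d) (Fin d) ℝ))
def Mset (m₁ m₂ : ℕ) : Finset ℕ := (Finset.Icc 1 (3 * m₂ - 1)).image (· * m₁)
def JM (m₁ m₂ : ℕ) : Matrix (Fin (3 * m₂ - 1)) (Fin (3 * m₁ * m₂)) ℝ :=
  Matrix.of fun i j =>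
    if j.val + 1 = (i.val + 1) * m₁ then -1
    else if j.val = (i.val + 1) * m₁ then 1 else 0
def Abar (m₁ m₂ d : ℕ) (Lf : ℝ) :
    Matrix (Fin (3 * m₂ - 1) × Fin d) (Fin (3 * m₁ * m₂) × Fin d) ℝ :=
  ((3 * m₁ * m₂ : ℕ) * Lf) • (JM m₁ m₂ ⊗ₖ (1 : Matrix (Fin d) (Fin d) ℝ))
abbrev MCidx (m₁ m₂ : ℕ) := {k : Fin (3 * m₁ * m₂ - 1) // k.val + 1 ∉ Mset m₁ m₂}
def JMC (m₁ m₂ : ℕ) : Matrix (MCidx m₁ m₂) (Fin (3 * m₁ * m₂)) ℝ :=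
  Matrix.of fun k j => Jmat (3 * m₁ * m₂) k.val j
def Amat (m₁ m₂ d : ℕ) (Lf : ℝ) :
    Matrix (MCidx m₁ m₂ × Fin d) (Fin (3 * m₁ * m₂) × Fin d) ℝ :=
  ((3 * m₁ * m₂ : ℕ) * Lf) • (JMC m₁ m₂ ⊗ₖ (1 : Matrix (Fin d) (Fin d) ℝ))
def mvec {ι κ : Type*} [Fintype κ] (M : Matrix ι κ ℝ) (x : EuclideanSpace ℝ κ) :
    EuclideanSpace ℝ ι :=
  WithLp.toLp 2 (fun i => ∑ j, M i j * x j)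
def sNorm {ι κ : Type*} [Fintype ι] [Fintype κ] [DecidableEq κ] (M : Matrix ι κ ℝ) : ℝ :=
  ‖LinearMap.toContinuousLinearMap (Matrix.toEuclideanLin M)‖
def lamMax {ι : Type*} [Fintype ι] [DecidableEq ι] (M : Matrix ι ι ℝ) : ℝ :=
  sSup (spectrum ℝ M)
def lamMinPos {ι : Type*} [Fintype ι] [DecidableEq ι] (M : Matrix ι ι ℝ) : ℝ :=
  sInf (spectrum ℝ M ∩ Set.Ioi 0)
def condNum {ι κ : Type*} [Fintype ι] [DecidableEq ι] [Fintype κ] (M : Matrix ι κ ℝ) : ℝ :=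
  Real.sqrt (lamMax (M * Mᵀ) / lamMinPos (M * Mᵀ))
def gfun (m₁ m₂ d : ℕ) (β : ℝ) (x : EuclideanSpace ℝ (Fin (3 * m₁ * m₂) × Fin d)) : ℝ :=
  β * ∑ i ∈ Mset m₁ m₂, l1norm (fun j => blkN x i j - blkN x (i + 1) j)
def gbar (m₁ m₂ d : ℕ) (Lf β : ℝ)
    (y : EuclideanSpace ℝ (Fin (3 * m₂ - 1) × Fin d)) : ℝ :=
  β / ((3 * m₁ * m₂ : ℕ) * Lf) * l1norm y
def IsProx {E : Type*} [NormedAddCommGroup E] [InnerProductSpace ℝ E]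
    (η : ℝ) (ψ : E → ℝ) (x p : E) : Prop :=
  ∀ y, ψ p + ‖p - x‖ ^ 2 / (2 * η) ≤ ψ y + ‖y - x‖ ^ 2 / (2 * η)
def subdiff {E : Type*} [NormedAddCommGroup E] [InnerProductSpace ℝ E]
    (ψ : E → ℝ) (x : E) : Set E :=
  {v | ∀ y, ψ x + (inner ℝ v (y - x) : ℝ) ≤ ψ y}
def suppSub {d : ℕ} (z : EuclideanSpace ℝ (Fin d)) (k : ℕ) : Prop :=
  ∀ j : Fin d, z j ≠ 0 → j.val + 1 ≤ k

/-- x is an ε̂-stationary point of instance 𝒫. -/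
def IsStatP (m₁ m₂ d : ℕ) (Lf ε β εh : ℝ)
    (x : EuclideanSpace ℝ (Fin (3 * m₁ * m₂) × Fin d)) : Prop :=
  ∃ γ : EuclideanSpace ℝ (MCidx m₁ m₂ × Fin d), ∃ ξ ∈ subdiff (gfun m₁ m₂ d β) x,
    ‖gradient (f0 (3 * m₁ * m₂) Lf ε) x + mvec (Amat m₁ m₂ d Lf)ᵀ γ + ξ‖ ≤ εh ∧
    ‖mvec (Amat m₁ m₂ d Lf) x‖ ≤ εh

/-- (x, y) is an ε̂-stationary point of the splitting reformulation (SP). -/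
def IsStatSP (m₁ m₂ d : ℕ) (Lf ε β εh : ℝ)
    (x : EuclideanSpace ℝ (Fin (3 * m₁ * m₂) × Fin d))
    (y : EuclideanSpace ℝ (Fin (3 * m₂ - 1) × Fin d)) : Prop :=
  ∃ z₁ : EuclideanSpace ℝ (Fin (3 * m₂ - 1) × Fin d),
    ∃ z₂ : EuclideanSpace ℝ (MCidx m₁ m₂ × Fin d),
      Metric.infDist 0 ((· - z₁) '' subdiff (gbar m₁ m₂ d Lf β) y) ≤ εh ∧
      ‖gradient (f0 (3 * m₁ * m₂) Lf ε) x + mvec (Abar m₁ m₂ d Lf)ᵀ z₁ +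
        mvec (Amat m₁ m₂ d Lf)ᵀ z₂‖ ≤ εh ∧
      ‖y - mvec (Abar m₁ m₂ d Lf) x‖ ≤ εh ∧ ‖mvec (Amat m₁ m₂ d Lf) x‖ ≤ εh

/-- The sequence X follows Algorithm Class 1 on instance 𝒫. -/
def FollowsAC1 (m₁ m₂ d : ℕ) (Lf ε β : ℝ)
    (X : ℕ → EuclideanSpace ℝ (Fin (3 * m₁ * m₂) × Fin d)) : Prop :=
  X 0 = 0 ∧ ∀ t, 1 ≤ t → ∃ η : ℝ, 0 < η ∧
    ∃ ξ ∈ Submodule.span ℝ (⋃ s ∈ Set.Iio t,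
      ({X s, gradient (f0 (3 * m₁ * m₂) Lf ε) (X s),
        mvec ((Amat m₁ m₂ d Lf)ᵀ * Amat m₁ m₂ d Lf) (X s)} :
          Set (EuclideanSpace ℝ (Fin (3 * m₁ * m₂) × Fin d)))),
      ∃ p, IsProx η (gfun m₁ m₂ d β) ξ p ∧
        X t ∈ Submodule.span ℝ ({ξ, p} : Set (EuclideanSpace ℝ (Fin (3 * m₁ * m₂) × Fin d)))

/-- The pair of sequences (X, Y) follows Algorithm Class 2 on the splitting
reformulation (SP) of instance 𝒫. -/
def FollowsAC2 (m₁ m₂ d : ℕ) (Lf ε β : ℝ)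
    (X : ℕ → EuclideanSpace ℝ (Fin (3 * m₁ * m₂) × Fin d))
    (Y : ℕ → EuclideanSpace ℝ (Fin (3 * m₂ - 1) × Fin d)) : Prop :=
  X 0 = 0 ∧ Y 0 = 0 ∧ ∀ t, 1 ≤ t →
    (X t ∈ Submodule.span ℝ (⋃ s ∈ Set.Iio t,
      ({X s, gradient (f0 (3 * m₁ * m₂) Lf ε) (X s),
        mvec ((Amat m₁ m₂ d Lf)ᵀ * Amat m₁ m₂ d Lf) (X s),
        mvec ((Abar m₁ m₂ d Lf)ᵀ * Abar m₁ m₂ d Lf) (X s),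
        mvec (Abar m₁ m₂ d Lf)ᵀ (Y s)} :
          Set (EuclideanSpace ℝ (Fin (3 * m₁ * m₂) × Fin d))))) ∧
    ∃ η : ℝ, 0 < η ∧
      ∃ ξ ∈ Submodule.span ℝ (⋃ s ∈ Set.Iio t,
        ({Y s, mvec (Abar m₁ m₂ d Lf * (Abar m₁ m₂ d Lf)ᵀ) (Y s),
          mvec (Abar m₁ m₂ d Lf) (X s)} :
            Set (EuclideanSpace ℝ (Fin (3 * m₂ - 1) × Fin d)))),
        ∃ p, IsProx η (gbar m₁ m₂ d Lf β) ξ p ∧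
          Y t ∈ Submodule.span ℝ
            ({ξ, p} : Set (EuclideanSpace ℝ (Fin (3 * m₂ - 1) × Fin d)))

lemma zc_add_smul {d : ℕ} (w : EuclideanSpace ℝ (Fin d)) (l : Fin d) (s : ℝ) (r : ℕ) :
    zc (w + s • EuclideanSpace.single l 1) r = zc w r + if r = l.val + 1 then s else 0 := by
  unfold zc
  by_cases h : 1 ≤ r ∧ r - 1 < d
  · rw [dif_pos h, dif_pos h]
    have he : (w + s • EuclideanSpace.single l (1:ℝ)) ⟨r-1, h.2⟩
        = w ⟨r-1, h.2⟩ + s * (EuclideanSpace.single l (1:ℝ)) ⟨r-1, h.2⟩ := rfl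
    rw [he, EuclideanSpace.single_apply]
    have hiff : (⟨r-1, h.2⟩ : Fin d) = l ↔ r = l.val + 1 := by
      constructor
      · intro he2; have := congrArg Fin.val he2; simp at this; omega
      · intro he2; apply Fin.ext; simp; omega
    by_cases hc : r = l.val + 1
    · rw [if_pos (hiff.mpr hc), if_pos hc]; ring
    · rw [if_neg (fun he2 => hc (hiff.mp he2)), if_neg hc]; ring
  · rw [dif_neg h, dif_neg h, if_neg, add_zero]
    intro hc; exact h ⟨by omega, by have := l.isLt; omega⟩

lemma psi_zero : Psi 0 = 0 := by simp [Psi]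

lemma psi_abs_le (u : ℝ) : |Psi u| ≤ u ^ 2 := by
  unfold Psi
  split_ifs with h
  · simpa using sq_nonneg u
  · have h1 : Real.exp (-u ^ 2) ≤ 1 := Real.exp_le_one_iff.mpr (by nlinarith)
    have h2 : 1 - u ^ 2 ≤ Real.exp (-u ^ 2) := by
      have := Real.add_one_le_exp (-u ^ 2); linarith
    rw [abs_of_nonneg (by linarith)]
    linarith

lemma psi_hasDerivAt_zero : HasDerivAt Psi 0 0 := by
  rw [hasDerivAt_iff_isLittleO, Asymptotics.isLittleO_iff]
  intro c hc
  filter_upwards [Metric.ball_mem_nhds (0:ℝ) hc] with u hu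
  have h1 : |Psi u| ≤ u ^ 2 := psi_abs_le u
  have h2 : |u| < c := by simpa [Real.dist_eq] using hu
  simp only [psi_zero, sub_zero, smul_zero, sub_zero, norm_eq_abs]
  calc |Psi u| ≤ u ^ 2 := h1
    _ = |u| * |u| := by rw [sq]; exact (abs_mul_abs_self u).symm
    _ ≤ c * |u| := by nlinarith [abs_nonneg u]

lemma psi_neg_hasDerivAt_zero (a b : ℝ) :
    HasDerivAt (fun s : ℝ => Psi (-s) * a - Psi s * b) 0 0 := by
  have h1 : HasDerivAt (fun s : ℝ => Psi (-s)) 0 0 := by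
    have h0 : HasDerivAt Psi 0 (-(0:ℝ)) := by simpa using psi_hasDerivAt_zero
    have := h0.comp 0 (hasDerivAt_neg (0:ℝ))
    simpa [Function.comp_def] using this
  simpa using (h1.mul_const a).fun_sub (psi_hasDerivAt_zero.mul_const b)

def pat (g i1 l1 : ℕ) : Prop := (i1 ≤ g ∧ Even l1) ∨ (2 * g + 1 ≤ i1 ∧ Odd l1)

lemma phi_slice_one {d : ℕ} (w : EuclideanSpace ℝ (Fin d)) (l : Fin d) (hl : l.val + 1 ≠ 1) :
    (fun s : ℝ => phi (w + s • EuclideanSpace.single l 1) 1) = fun _ => phi w 1 := by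
  funext s; unfold phi
  rw [if_pos rfl, if_pos rfl, zc_add_smul, if_neg (by omega : ¬(1 = l.val + 1)), add_zero]

lemma phi_slice_A {d : ℕ} (w : EuclideanSpace ℝ (Fin d)) (l : Fin d) (q : ℕ)
    (hq : q ≠ 1) (h1 : q ≠ l.val + 1) (h2 : q - 1 ≠ l.val + 1) :
    (fun s : ℝ => phi (w + s • EuclideanSpace.single l 1) q) = fun _ => phi w q := by
  funext s; unfold phi
  rw [if_neg hq, if_neg hq]
  simp only [zc_add_smul, if_neg h1, if_neg h2, add_zero]

lemma phi_slice_B {d : ℕ} (w : EuclideanSpace ℝ (Fin d)) (l : Fin d) (q : ℕ)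
    (hq : q ≠ 1) (h1 : q = l.val + 1) (hprev : zc w (q - 1) = 0) :
    (fun s : ℝ => phi (w + s • EuclideanSpace.single l 1) q) = fun _ => 0 := by
  funext s; unfold phi
  rw [if_neg hq]
  simp only [zc_add_smul, if_neg (show ¬(q - 1 = l.val + 1) by omega), add_zero, hprev]
  simp [psi_zero]


lemma phi_slice_C {d : ℕ} (w : EuclideanSpace ℝ (Fin d)) (l : Fin d) (q : ℕ)
    (hq : q ≠ 1) (h1 : q = l.val + 2) (hz : zc w (l.val + 1) = 0) :
    HasDerivAt (fun s : ℝ => phi (w + s • EuclideanSpace.single l 1) q) 0 0 := by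
  have he : (fun s : ℝ => phi (w + s • EuclideanSpace.single l 1) q)
      = fun s => Psi (-s) * Phi (-zc w q) - Psi s * Phi (zc w q) := by
    funext s; unfold phi
    rw [if_neg hq]
    simp only [zc_add_smul, if_neg (show ¬(q = l.val + 1) by omega),
      if_pos (show q - 1 = l.val + 1 by omega), add_zero,
      show q - 1 = l.val + 1 by omega, hz, zero_add, if_true]
  rw [he]; exact psi_neg_hasDerivAt_zero _ _

lemma sum_slice_deriv {d : ℕ} (S : Finset ℕ)
    (F : ℕ → ℝ → ℝ) (hF : ∀ q ∈ S, HasDerivAt (F q) 0 0) :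
    HasDerivAt (fun s : ℝ => ∑ q ∈ S, F q s) 0 0 := by
  have := HasDerivAt.fun_sum (u := S) (A := fun q s => F q s) (A' := fun _ => 0) (x := (0:ℝ))
    (fun i hi => hF i hi)
  simpa using this

lemma hfun_slice {d : ℕ} (m g i1 : ℕ) (hg : m / 3 = g) (hg2 : 2 * m / 3 = 2 * g)
    (w : EuclideanSpace ℝ (Fin d)) (l : Fin d) (hl : 1 ≤ l.val)
    (hz : zc w (l.val + 1) = 0)
    (hprev : zc w l.val = 0 ∨ ¬ pat g i1 (l.val + 1)) :
    HasDerivAt (fun s : ℝ => hfun m i1 (w + s • EuclideanSpace.single l 1)) 0 0 := by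
  have h1 : HasDerivAt (fun s : ℝ => phi (w + s • EuclideanSpace.single l 1) 1) 0 0 := by
    rw [phi_slice_one w l (by omega)]; exact hasDerivAt_const _ _
  by_cases hi : i1 ≤ m / 3
  · simp only [hfun, if_pos hi]
    have hsum : ∀ q ∈ Finset.Icc 1 (d / 2),
        HasDerivAt (fun s : ℝ => phi (w + s • EuclideanSpace.single l 1) (2 * q)) 0 0 := by
      intro q hq
      rcases Finset.mem_Icc.mp hq with ⟨hq1, hq2⟩
      by_cases hc1 : 2 * q = l.val + 1
      · have hpat : pat g i1 (l.val + 1) := Or.inl ⟨hg ▸ hi, hc1 ▸ ⟨q, by omega⟩⟩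
        have hp : zc w l.val = 0 := hprev.resolve_right (fun h => h hpat)
        rw [phi_slice_B w l (2*q) (by omega) hc1 (by rwa [show 2*q-1 = l.val by omega])]
        exact hasDerivAt_const _ _
      · by_cases hc2 : 2 * q = l.val + 2
        · exact phi_slice_C w l (2*q) (by omega) hc2 hz
        · rw [phi_slice_A w l (2*q) (by omega) hc1 (by omega)]
          exact hasDerivAt_const _ _
    have h2 := (sum_slice_deriv (d := d) _ _ hsum).const_mul (3:ℝ)
    simpa using h1.fun_add h2
  · by_cases hi2 : i1 ≤ 2 * m / 3
    · simp only [hfun, if_neg hi, if_pos hi2]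
      exact h1
    · simp only [hfun, if_neg hi, if_neg hi2]
      have hsum : ∀ q ∈ Finset.Icc 1 (d / 2),
          HasDerivAt (fun s : ℝ => phi (w + s • EuclideanSpace.single l 1) (2 * q + 1)) 0 0 := by
        intro q hq
        rcases Finset.mem_Icc.mp hq with ⟨hq1, hq2⟩
        by_cases hc1 : 2 * q + 1 = l.val + 1
        · have hpat : pat g i1 (l.val + 1) := Or.inr ⟨by omega, hc1 ▸ ⟨q, by omega⟩⟩
          have hp : zc w l.val = 0 := hprev.resolve_right (fun h => h hpat)
          rw [phi_slice_B w l (2*q+1) (by omega) hc1 (by rwa [show 2*q+1-1 = l.val by omega])]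
          exact hasDerivAt_const _ _
        · by_cases hc2 : 2 * q + 1 = l.val + 2
          · exact phi_slice_C w l (2*q+1) (by omega) hc2 hz
          · rw [phi_slice_A w l (2*q+1) (by omega) hc1 (by omega)]
            exact hasDerivAt_const _ _
      have h2 := (sum_slice_deriv (d := d) _ _ hsum).const_mul (3:ℝ)
      simpa using h1.fun_add h2

lemma zc_smul {d : ℕ} (c : ℝ) (z : EuclideanSpace ℝ (Fin d)) (r : ℕ) :
    zc (c • z) r = c * zc z r := by
  unfold zc; split_ifs with h
  · rfl
  · ring

lemma zc_val {d : ℕ} (z : EuclideanSpace ℝ (Fin d)) (l : Fin d) :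
    zc z (l.val + 1) = z l := by
  unfold zc
  rw [dif_pos ⟨by omega, by simpa using l.isLt⟩]
  exact congrArg (fun j => z j) (Fin.ext (by simp))

lemma blk_add_single_eq {n d : ℕ} (x : EuclideanSpace ℝ (Fin n × Fin d))
    (i : Fin n) (l : Fin d) (t : ℝ) :
    blkN (x + t • EuclideanSpace.single (i, l) (1:ℝ)) (i.val + 1)
      = blkN x (i.val + 1) + t • EuclideanSpace.single l 1 := by
  ext j
  have h : 1 ≤ i.val + 1 ∧ i.val + 1 - 1 < n := ⟨by omega, by simpa using i.isLt⟩
  have he : (⟨i.val + 1 - 1, h.2⟩ : Fin n) = i := Fin.ext (by simp)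
  have lhs : blkN (x + t • EuclideanSpace.single (i, l) (1:ℝ)) (i.val + 1) j
      = x (i, j) + t * (EuclideanSpace.single (i, l) (1:ℝ)) (i, j) := by
    simp only [blkN, dif_pos h, he]
    rfl
  have rhs : (blkN x (i.val + 1) + t • EuclideanSpace.single l (1:ℝ)) j
      = x (i, j) + t * (EuclideanSpace.single l (1:ℝ)) j := by
    have : (blkN x (i.val + 1) + t • EuclideanSpace.single l (1:ℝ)) j
        = blkN x (i.val + 1) j + t * (EuclideanSpace.single l (1:ℝ)) j := rfl
    rw [this]
    simp only [blkN, dif_pos h]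
    exact congrArg (fun p : Fin n => x (p, j) + t * (EuclideanSpace.single l (1:ℝ)) j) he
  rw [lhs, rhs, EuclideanSpace.single_apply, EuclideanSpace.single_apply]
  congr 2
  simp [Prod.ext_iff]

lemma blk_add_single_ne {n d : ℕ} (x : EuclideanSpace ℝ (Fin n × Fin d))
    (i : Fin n) (l : Fin d) (t : ℝ) (i' : ℕ) (h : i' ≠ i.val + 1) :
    blkN (x + t • EuclideanSpace.single (i, l) (1:ℝ)) i' = blkN x i' := by
  ext j
  simp only [blkN]
  split_ifs with h2
  · show x (⟨i'-1, h2.2⟩, j) + t * (EuclideanSpace.single (i, l) (1:ℝ)) (⟨i'-1, h2.2⟩, j)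
        = x (⟨i'-1, h2.2⟩, j)
    rw [EuclideanSpace.single_apply, if_neg, mul_zero, add_zero]
    intro hc
    have : (⟨i'-1, h2.2⟩ : Fin n) = i := (Prod.ext_iff.mp hc).1
    have := congrArg Fin.val this
    simp at this; omega
  · rfl

lemma grad_f0_zero (m₁ m₂ dd : ℕ) (hm₁ : 1 ≤ m₁) (hm₂ : 1 ≤ m₂) (Lf ε : ℝ)
    (x : EuclideanSpace ℝ (Fin (3 * m₁ * m₂) × Fin dd))
    (i : Fin (3 * m₁ * m₂)) (l : Fin dd) (hl : 1 ≤ l.val)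
    (hz : x (i, l) = 0)
    (hprev : (∀ h' : l.val - 1 < dd, x (i, ⟨l.val - 1, h'⟩) = 0)
      ∨ ¬ pat (m₁ * m₂) (i.val + 1) (l.val + 1)) :
    gradient (f0 (3 * m₁ * m₂) Lf ε) x (i, l) = 0 := by
  set F := f0 (3 * m₁ * m₂) Lf ε with hF
  set v := EuclideanSpace.single (i, l) (1:ℝ) with hv
  have key : gradient F x (i, l) = fderiv ℝ F x v := by
    have h1 : (inner ℝ (gradient F x) v : ℝ) = fderiv ℝ F x v := by
      rw [gradient]; exact InnerProductSpace.toDual_symm_apply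
    rw [← h1, hv, EuclideanSpace.inner_single_right]
    simp
  rw [key]
  by_cases hD : DifferentiableAt ℝ F x
  · -- line derivative argument
    have h0 : HasDerivAt (fun t : ℝ => x + t • v) v 0 := by
      simpa using ((hasDerivAt_id (0:ℝ)).smul_const v).const_add x
    have hx0 : x + (0:ℝ) • v = x := by simp
    have hline : HasDerivAt (fun t : ℝ => F (x + t • v)) (fderiv ℝ F x v) 0 := by
      have := (hx0 ▸ hD.hasFDerivAt).comp_hasDerivAt 0 h0
      simpa [Function.comp_def] using this
    -- now show the slice has derivative 0
    set c : ℝ := Real.sqrt ((3 * m₁ * m₂ : ℕ) : ℝ) * Lf / (150 * π * ε) with hc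
    set z : EuclideanSpace ℝ (Fin dd) := blkN x (i.val + 1) with hzdef
    have hzl : z l = x (i, l) := by
      simp only [hzdef, blkN, dif_pos (⟨by omega, by simpa using i.isLt⟩ : 1 ≤ i.val + 1 ∧ i.val + 1 - 1 < (3 * m₁ * m₂))]
      exact congrArg (fun p : Fin (3 * m₁ * m₂) => x (p, l)) (Fin.ext (by simp))
    have hg3 : (3 * m₁ * m₂) / 3 = m₁ * m₂ := by
      rw [mul_assoc]; exact Nat.mul_div_cancel_left _ (by norm_num)
    have hg6 : 2 * (3 * m₁ * m₂) / 3 = 2 * (m₁ * m₂) := by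
      rw [show 2 * (3 * m₁ * m₂) = 3 * (2 * (m₁ * m₂)) by ring]
      exact Nat.mul_div_cancel_left _ (by norm_num)
    have hzc1 : zc (c • z) (l.val + 1) = 0 := by
      rw [zc_smul, zc_val, hzl, hz, mul_zero]
    have hzc2 : zc (c • z) l.val = 0 ∨ ¬ pat (m₁ * m₂) (i.val + 1) (l.val + 1) := by
      rcases hprev with hp | hp
      · left
        rw [zc_smul]
        unfold zc
        rw [dif_pos ⟨hl, by have := l.isLt; omega⟩]
        have : z ⟨l.val - 1, by have := l.isLt; omega⟩
            = x (i, ⟨l.val - 1, by have := l.isLt; omega⟩) := by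
          simp only [hzdef, blkN, dif_pos (⟨by omega, by simpa using i.isLt⟩ : 1 ≤ i.val + 1 ∧ i.val + 1 - 1 < (3 * m₁ * m₂))]
          exact congrArg (fun p : Fin (3 * m₁ * m₂) => x (p, _)) (Fin.ext (by simp))
        rw [this, hp (by have := l.isLt; omega), mul_zero]
      · right; exact hp
    have hcore : HasDerivAt
        (fun s : ℝ => hfun (3 * m₁ * m₂) (i.val + 1) ((c • z) + s • EuclideanSpace.single l 1)) 0 0 :=
      hfun_slice (3 * m₁ * m₂) (m₁ * m₂) (i.val + 1) hg3 hg6 (c • z) l hl hzc1 hzc2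
    have hcm : HasDerivAt (fun t : ℝ => c * t) c 0 := by
      simpa using (hasDerivAt_id (0:ℝ)).const_mul c
    have h2 : HasDerivAt
        (fun t : ℝ => hfun (3 * m₁ * m₂) (i.val + 1) ((c • z) + (c * t) • EuclideanSpace.single l 1)) 0 0 := by
      have h2' : HasDerivAt
          (fun s : ℝ => hfun (3 * m₁ * m₂) (i.val + 1) ((c • z) + s • EuclideanSpace.single l 1)) 0 (c * 0) := by
        simpa using hcore
      simpa [Function.comp_def] using h2'.comp 0 hcm
    have hmem : i.val + 1 ∈ Finset.Icc 1 (3 * m₁ * m₂) := Finset.mem_Icc.mpr ⟨by omega, by have := i.isLt; omega⟩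
    have hrw : (fun t : ℝ => F (x + t • v))
        = fun t : ℝ => (300 * π * ε ^ 2 / (((3 * m₁ * m₂ : ℕ) : ℝ) * Lf)) *
            hfun (3 * m₁ * m₂) (i.val + 1) ((c • z) + (c * t) • EuclideanSpace.single l 1)
          + ∑ i' ∈ (Finset.Icc 1 (3 * m₁ * m₂)).erase (i.val + 1), ff (3 * m₁ * m₂) Lf ε i' (blkN x i') := by
      funext t
      rw [hF]
      unfold f0
      rw [← Finset.add_sum_erase _ _ hmem]
      congr 1
      · rw [hv, blk_add_single_eq]
        unfold ff
        congr 1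
        rw [smul_add, smul_smul, ← hzdef, ← hc]
      · refine Finset.sum_congr rfl fun i' hi' => ?_
        rw [hv, blk_add_single_ne]
        exact (Finset.mem_erase.mp hi').1
    have hzero : HasDerivAt (fun t : ℝ => F (x + t • v)) 0 0 := by
      rw [hrw]
      simpa using (h2.const_mul (300 * π * ε ^ 2 / (((3 * m₁ * m₂ : ℕ) : ℝ) * Lf))).add_const (∑ i' ∈ (Finset.Icc 1 (3 * m₁ * m₂)).erase (i.val + 1), ff (3 * m₁ * m₂) Lf ε i' (blkN x i'))
    exact hline.unique hzero
  · rw [fderiv_zero_of_not_differentiableAt hD]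
    rfl

def Tf (g i k : ℕ) : ℕ :=
  if k ≤ 1 then 1
  else if k = 2 then 2 + (i - g)
  else (k - 2) * (g + 2) + 2 +
    (if Even k then (i - g) + (g - i) else (i - (2*g+1)) + ((2*g+1) - i))

lemma Tf_one (g i : ℕ) : Tf g i 1 = 1 := by simp [Tf]

lemma Tf_pos (g i k : ℕ) : 1 ≤ Tf g i k := by
  unfold Tf; split_ifs <;> omega

lemma Tf_lip (g i i' k : ℕ) (h : i - i' + (i' - i) ≤ 1) : Tf g i k ≤ Tf g i' k + 1 := by
  unfold Tf; split_ifs <;> omega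

lemma Tf_adv (g i k : ℕ) (hk : 2 ≤ k) (hp : pat g i k) : Tf g i k ≤ Tf g i (k-1) + 1 := by
  rcases hp with ⟨hig, hek⟩ | ⟨hig, hok⟩
  · have hk2 : k % 2 = 0 := Nat.even_iff.mp hek
    by_cases h2 : k = 2
    · subst h2; simp [Tf]; omega
    · have hk4 : 4 ≤ k := by omega
      have e1 : Tf g i k = (k-2) * (g+2) + 2 + ((i - g) + (g - i)) := by
        unfold Tf; rw [if_neg (by omega), if_neg (by omega), if_pos hek]
      have e2 : Tf g i (k-1) = (k-3) * (g+2) + 2 + ((i - (2*g+1)) + ((2*g+1) - i)) := by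
        unfold Tf
        rw [if_neg (by omega), if_neg (by omega),
          if_neg (by rw [Nat.even_iff]; omega), show k-1-2 = k-3 by omega]
      rw [e1, e2, show k-2 = (k-3)+1 by omega, add_mul, one_mul]
      omega
  · have hk2 : k % 2 = 1 := Nat.odd_iff.mp hok
    have hk3 : 3 ≤ k := by omega
    by_cases h3 : k = 3
    · subst h3
      have e1 : Tf g i 3 = 1 * (g+2) + 2 + ((i - (2*g+1)) + ((2*g+1) - i)) := by
        unfold Tf; rw [if_neg (by omega), if_neg (by omega), if_neg (by decide)]
      have e2 : Tf g i 2 = 2 + (i - g) := by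
        unfold Tf; rw [if_neg (by omega), if_pos rfl]
      rw [e1, e2]; omega
    · have hk5 : 5 ≤ k := by omega
      have e1 : Tf g i k = (k-2) * (g+2) + 2 + ((i - (2*g+1)) + ((2*g+1) - i)) := by
        unfold Tf
        rw [if_neg (by omega), if_neg (by omega), if_neg (by rw [Nat.even_iff]; omega)]
      have e2 : Tf g i (k-1) = (k-3) * (g+2) + 2 + ((i - g) + (g - i)) := by
        unfold Tf
        rw [if_neg (by omega), if_neg (by omega),
          if_pos (by rw [Nat.even_iff]; omega), show k-1-2 = k-3 by omega]
      rw [e1, e2, show k-2 = (k-3)+1 by omega, add_mul, one_mul]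
      omega

lemma Tf_lb (g i k : ℕ) (hk : 2 ≤ k) : 2 + g * (k - 2) ≤ Tf g i k := by
  by_cases h2 : k = 2
  · subst h2; unfold Tf; simp
  · have e1 : (k-2) * g ≤ (k-2) * (g+2) := Nat.mul_le_mul_left _ (by omega)
    have e2 : g * (k-2) = (k-2) * g := Nat.mul_comm _ _
    unfold Tf
    rw [if_neg (by omega), if_neg h2]
    split_ifs <;> omega

def zeroOn {ι : Type*} [Fintype ι] (P : ι → Prop) : Submodule ℝ (EuclideanSpace ℝ ι) where
  carrier := {v | ∀ a, ¬ P a → v a = 0}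
  add_mem' := fun {v w} hv hw a ha => by
    show v a + w a = 0
    rw [hv a ha, hw a ha, add_zero]
  zero_mem' := fun a _ => rfl
  smul_mem' := fun c v hv a ha => by
    show c * v a = 0
    rw [hv a ha, mul_zero]

lemma mem_zeroOn {ι : Type*} [Fintype ι] {P : ι → Prop} {v : EuclideanSpace ℝ ι} :
    v ∈ zeroOn P ↔ ∀ a, ¬ P a → v a = 0 := Iff.rfl

lemma zeroOn_ne {ι : Type*} [Fintype ι] {P : ι → Prop} {v : EuclideanSpace ℝ ι}
    (hv : v ∈ zeroOn P) {a : ι} (ha : v a ≠ 0) : P a := by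
  by_contra hc; exact ha (hv a hc)

lemma mvec_ne {ι κ : Type*} [Fintype κ] (M : Matrix ι κ ℝ) (v : EuclideanSpace ℝ κ)
    (i : ι) (h : mvec M v i ≠ 0) : ∃ j, M i j ≠ 0 ∧ v j ≠ 0 := by
  by_contra hc
  push_neg at hc
  apply h
  apply Finset.sum_eq_zero
  intro j _
  by_cases hM : M i j = 0
  · rw [hM, zero_mul]
  · rw [hc j hM, mul_zero]

lemma matmul_ne {ι κ μ : Type*} [Fintype κ] (M : Matrix ι κ ℝ) (N : Matrix κ μ ℝ)
    (a : ι) (b : μ) (h : (M * N) a b ≠ 0) : ∃ c, M a c ≠ 0 ∧ N c b ≠ 0 := by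
  by_contra hc
  push_neg at hc
  apply h
  rw [Matrix.mul_apply]
  apply Finset.sum_eq_zero
  intro c _
  by_cases hM : M a c = 0
  · rw [hM, zero_mul]
  · rw [hc c hM, mul_zero]

lemma Jmat_ne {p : ℕ} (k : Fin (p-1)) (j : Fin p) (h : Jmat p k j ≠ 0) :
    j.val = k.val ∨ j.val = k.val + 1 := by
  by_contra hc
  push_neg at hc
  apply h
  simp only [Jmat, Matrix.of_apply]
  rw [if_neg hc.1, if_neg hc.2]

lemma JM_ne {m₁ m₂ : ℕ} (k : Fin (3*m₂-1)) (j : Fin (3*m₁*m₂)) (h : JM m₁ m₂ k j ≠ 0) :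
    j.val + 1 = (k.val+1) * m₁ ∨ j.val = (k.val+1) * m₁ := by
  by_contra hc
  push_neg at hc
  apply h
  simp only [JM, Matrix.of_apply]
  rw [if_neg hc.1, if_neg hc.2]

lemma Amat_ne {m₁ m₂ d : ℕ} {Lf : ℝ} (k : MCidx m₁ m₂) (a : Fin d)
    (j : Fin (3*m₁*m₂)) (b : Fin d) (h : Amat m₁ m₂ d Lf (k, a) (j, b) ≠ 0) :
    a = b ∧ (j.val = k.val.val ∨ j.val = k.val.val + 1) := by
  have h2 : Amat m₁ m₂ d Lf (k, a) (j, b)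
      = ((3*m₁*m₂ : ℕ) * Lf) * (JMC m₁ m₂ k j * (1 : Matrix (Fin d) (Fin d) ℝ) a b) := rfl
  rw [h2] at h
  have h3 : JMC m₁ m₂ k j ≠ 0 ∧ (1 : Matrix (Fin d) (Fin d) ℝ) a b ≠ 0 := by
    constructor <;> intro hc <;> apply h <;> rw [hc] <;> ring
  refine ⟨?_, Jmat_ne k.val j h3.1⟩
  by_contra hc
  exact h3.2 (by rw [Matrix.one_apply_ne hc])

lemma Abar_ne {m₁ m₂ d : ℕ} {Lf : ℝ} (k : Fin (3*m₂-1)) (a : Fin d)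
    (j : Fin (3*m₁*m₂)) (b : Fin d) (h : Abar m₁ m₂ d Lf (k, a) (j, b) ≠ 0) :
    a = b ∧ (j.val + 1 = (k.val+1) * m₁ ∨ j.val = (k.val+1) * m₁) := by
  have h2 : Abar m₁ m₂ d Lf (k, a) (j, b)
      = ((3*m₁*m₂ : ℕ) * Lf) * (JM m₁ m₂ k j * (1 : Matrix (Fin d) (Fin d) ℝ) a b) := rfl
  rw [h2] at h
  have h3 : JM m₁ m₂ k j ≠ 0 ∧ (1 : Matrix (Fin d) (Fin d) ℝ) a b ≠ 0 := by
    constructor <;> intro hc <;> apply h <;> rw [hc] <;> ring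
  refine ⟨?_, JM_ne k j h3.1⟩
  by_contra hc
  exact h3.2 (by rw [Matrix.one_apply_ne hc])

lemma supp_ATA {m₁ m₂ d : ℕ} {Lf : ℝ} (v : EuclideanSpace ℝ (Fin (3*m₁*m₂) × Fin d))
    (i : Fin (3*m₁*m₂)) (a : Fin d)
    (h : mvec ((Amat m₁ m₂ d Lf)ᵀ * Amat m₁ m₂ d Lf) v (i, a) ≠ 0) :
    ∃ i' : Fin (3*m₁*m₂), (i.val - i'.val) + (i'.val - i.val) ≤ 1 ∧ v (i', a) ≠ 0 := by
  obtain ⟨⟨j, b⟩, hM, hv⟩ := mvec_ne _ _ _ h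
  obtain ⟨⟨k, c⟩, h1, h2⟩ := matmul_ne _ _ _ _ hM
  have h1' : Amat m₁ m₂ d Lf (k, c) (i, a) ≠ 0 := h1
  obtain ⟨hca, hi⟩ := Amat_ne _ _ _ _ h1'
  obtain ⟨hcb, hj⟩ := Amat_ne _ _ _ _ h2
  have hab : a = b := hca.symm.trans hcb
  subst hab
  exact ⟨j, by omega, hv⟩

lemma supp_ABarTABar {m₁ m₂ d : ℕ} {Lf : ℝ} (v : EuclideanSpace ℝ (Fin (3*m₁*m₂) × Fin d))
    (i : Fin (3*m₁*m₂)) (a : Fin d)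
    (h : mvec ((Abar m₁ m₂ d Lf)ᵀ * Abar m₁ m₂ d Lf) v (i, a) ≠ 0) :
    ∃ i' : Fin (3*m₁*m₂), (i.val - i'.val) + (i'.val - i.val) ≤ 1 ∧ v (i', a) ≠ 0 := by
  obtain ⟨⟨j, b⟩, hM, hv⟩ := mvec_ne _ _ _ h
  obtain ⟨⟨k, c⟩, h1, h2⟩ := matmul_ne _ _ _ _ hM
  have h1' : Abar m₁ m₂ d Lf (k, c) (i, a) ≠ 0 := h1
  obtain ⟨hca, hi⟩ := Abar_ne _ _ _ _ h1'
  obtain ⟨hcb, hj⟩ := Abar_ne _ _ _ _ h2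
  have hab : a = b := hca.symm.trans hcb
  subst hab
  exact ⟨j, by omega, hv⟩

lemma supp_ABarT {m₁ m₂ d : ℕ} {Lf : ℝ} (y : EuclideanSpace ℝ (Fin (3*m₂-1) × Fin d))
    (i : Fin (3*m₁*m₂)) (a : Fin d)
    (h : mvec (Abar m₁ m₂ d Lf)ᵀ y (i, a) ≠ 0) :
    ∃ k : Fin (3*m₂-1), (i.val + 1 = (k.val+1) * m₁ ∨ i.val = (k.val+1) * m₁)
      ∧ y (k, a) ≠ 0 := by
  obtain ⟨⟨k, b⟩, hM, hy⟩ := mvec_ne _ _ _ h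
  have hM' : Abar m₁ m₂ d Lf (k, b) (i, a) ≠ 0 := hM
  obtain ⟨hba, hi⟩ := Abar_ne _ _ _ _ hM'
  subst hba
  exact ⟨k, hi, hy⟩

lemma supp_ABar {m₁ m₂ d : ℕ} {Lf : ℝ} (x : EuclideanSpace ℝ (Fin (3*m₁*m₂) × Fin d))
    (k : Fin (3*m₂-1)) (a : Fin d)
    (h : mvec (Abar m₁ m₂ d Lf) x (k, a) ≠ 0) :
    ∃ j : Fin (3*m₁*m₂), (j.val + 1 = (k.val+1) * m₁ ∨ j.val = (k.val+1) * m₁)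
      ∧ x (j, a) ≠ 0 := by
  obtain ⟨⟨j, b⟩, hM, hx⟩ := mvec_ne _ _ _ h
  obtain ⟨hab, hj⟩ := Abar_ne _ _ _ _ hM
  subst hab
  exact ⟨j, hj, hx⟩

lemma supp_ABarABarT {m₁ m₂ d : ℕ} {Lf : ℝ} (hm₁ : 2 ≤ m₁)
    (y : EuclideanSpace ℝ (Fin (3*m₂-1) × Fin d)) (k : Fin (3*m₂-1)) (a : Fin d)
    (h : mvec (Abar m₁ m₂ d Lf * (Abar m₁ m₂ d Lf)ᵀ) y (k, a) ≠ 0) :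
    y (k, a) ≠ 0 := by
  obtain ⟨⟨k', b⟩, hM, hy⟩ := mvec_ne _ _ _ h
  obtain ⟨⟨j, c⟩, h1, h2⟩ := matmul_ne _ _ _ _ hM
  have h2' : Abar m₁ m₂ d Lf (k', b) (j, c) ≠ 0 := h2
  obtain ⟨hca, hi⟩ := Abar_ne _ _ _ _ h1
  obtain ⟨hcb, hj⟩ := Abar_ne _ _ _ _ h2'
  -- hi : about k, hj : about k'
  have hkk : k = k' := by
    have e1 := hi
    have e2 := hj
    have hkv : (k.val + 1) * m₁ = (k'.val + 1) * m₁ := by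
      rcases Nat.lt_trichotomy k.val k'.val with hlt | heq | hgt
      · exfalso
        have : (k.val + 1 + 1) * m₁ ≤ (k'.val + 1) * m₁ := Nat.mul_le_mul_right _ (by omega)
        have : (k.val + 1) * m₁ + m₁ ≤ (k'.val + 1) * m₁ := by
          rw [show (k.val + 1 + 1) * m₁ = (k.val + 1) * m₁ + m₁ by ring] at this
          exact this
        omega
      · rw [heq]
      · exfalso
        have : (k'.val + 1 + 1) * m₁ ≤ (k.val + 1) * m₁ := Nat.mul_le_mul_right _ (by omega)
        have : (k'.val + 1) * m₁ + m₁ ≤ (k.val + 1) * m₁ := by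
          rw [show (k'.val + 1 + 1) * m₁ = (k'.val + 1) * m₁ + m₁ by ring] at this
          exact this
        omega
    apply Fin.ext
    have hm₁' : 0 < m₁ := by omega
    have := Nat.eq_of_mul_eq_mul_right hm₁' hkv
    omega
  have hab : a = b := hca.trans hcb.symm
  subst hkk; subst hab
  exact hy

lemma eucl_norm_sq {ι : Type*} [Fintype ι] (v : EuclideanSpace ℝ ι) :
    ‖v‖ ^ 2 = ∑ i, (v i) ^ 2 := by
  rw [EuclideanSpace.norm_eq, Real.sq_sqrt (by positivity)]
  refine Finset.sum_congr rfl fun i _ => ?_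
  rw [Real.norm_eq_abs, sq_abs]

lemma prox_supp {m₁ m₂ d : ℕ} {Lf β η : ℝ} (hβ : 0 ≤ β / ((3*m₁*m₂ : ℕ) * Lf))
    (hη : 0 < η) (ξ p : EuclideanSpace ℝ (Fin (3*m₂-1) × Fin d))
    (hp : IsProx η (gbar m₁ m₂ d Lf β) ξ p) (a : Fin (3*m₂-1) × Fin d)
    (hz : ξ a = 0) : p a = 0 := by
  set c := β / ((3*m₁*m₂ : ℕ) * Lf) with hc
  set p' : EuclideanSpace ℝ (Fin (3*m₂-1) × Fin d) := WithLp.toLp 2 (Function.update p a 0) with hp'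
  have key := hp p'
  have hgb : ∀ q, gbar m₁ m₂ d Lf β q = c * l1norm q := fun q => rfl
  have habs : (fun i => |p' i|) = Function.update (fun i => |p i|) a 0 := by
    funext i
    by_cases h : i = a
    · subst h; simp [hp']
    · rw [hp', WithLp.ofLp_toLp, Function.update_of_ne h, Function.update_of_ne h]
  have hl1 : l1norm p' = l1norm p - |p a| := by
    unfold l1norm
    rw [show (∑ i, |p' i|) = ∑ i, Function.update (fun i => |p i|) a 0 i from by rw [habs]]
    rw [Finset.sum_update_of_mem (Finset.mem_univ a), Finset.sdiff_singleton_eq_erase,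
      ← Finset.add_sum_erase _ _ (Finset.mem_univ a)]
    ring
  have hsub : ∀ i, (p' - ξ) i = Function.update (fun i => (p - ξ) i) a 0 i := by
    intro i
    by_cases h : i = a
    · subst h
      show p' i - ξ i = _
      simp [hp', hz]
    · show p' i - ξ i = _
      rw [hp', WithLp.ofLp_toLp, Function.update_of_ne h, Function.update_of_ne h]
      rfl
  have hnorm : ‖p' - ξ‖ ^ 2 = ‖p - ξ‖ ^ 2 - (p a) ^ 2 := by
    rw [eucl_norm_sq, eucl_norm_sq]
    have h1 : (∑ i, ((p' - ξ) i) ^ 2)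
        = ∑ i, (Function.update (fun i => (p - ξ) i) a 0 i) ^ 2 := by
      refine Finset.sum_congr rfl fun i _ => ?_
      rw [hsub i]
    rw [h1]
    have h2 : (fun i => (Function.update (fun i => (p - ξ) i) a 0 i) ^ 2)
        = Function.update (fun i => ((p - ξ) i) ^ 2) a 0 := by
      funext i
      by_cases h : i = a
      · subst h; simp
      · rw [Function.update_of_ne h, Function.update_of_ne h]
    rw [show (∑ i, (Function.update (fun i => (p - ξ) i) a 0 i) ^ 2)
        = ∑ i, Function.update (fun i => ((p - ξ) i) ^ 2) a 0 i from by rw [h2]]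
    rw [Finset.sum_update_of_mem (Finset.mem_univ a), Finset.sdiff_singleton_eq_erase,
      ← Finset.add_sum_erase _ _ (Finset.mem_univ a)]
    have h3 : (p - ξ) a = p a := by
      show p a - ξ a = p a
      rw [hz, sub_zero]
    rw [h3]
    ring
  rw [hgb, hgb, hl1, hnorm] at key
  have hpa2 : (p a) ^ 2 ≤ 0 := by
    have h1 : 0 ≤ c * |p a| := mul_nonneg hβ (abs_nonneg _)
    rw [mul_sub, sub_div] at key
    have h4 : p a ^ 2 / (2*η) ≤ 0 := by linarith
    exact le_of_not_gt fun hpos =>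
      (not_le.mpr (div_pos hpos (by linarith : (0:ℝ) < 2*η))) h4
  have := le_antisymm hpa2 (sq_nonneg _)
  exact pow_eq_zero_iff (by norm_num) |>.mp this

/-- For any pair of sequences following Algorithm Class 2 on (SP) started at 0:
supp(x_i^{(t)}) ⊆ {1,…,j̄−1} and supp(y_j^{(t)}) ⊆ {1,…,j̄−1} whenever
t ≤ 1 + m(j̄−2)/3. -/
theorem stmt_17 (Lf ε : ℝ) (hLf : 0 < Lf) (hε0 : 0 < ε) (hε1 : ε < 1)
    (m₁ m₂ : ℕ) (hm₁ : 2 ≤ m₁) (hm₂ : 1 ≤ m₂) (heven : Even (m₁ * m₂))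
    (d : ℕ) (hd : 5 ≤ d) (hodd : Odd d)
    (β : ℝ) (hβ : (50 * π + 1 + sNorm (Amat m₁ m₂ d Lf)) * Real.sqrt (3 * m₁ * m₂) * ε < β)
    (X : ℕ → EuclideanSpace ℝ (Fin (3 * m₁ * m₂) × Fin d))
    (Y : ℕ → EuclideanSpace ℝ (Fin (3 * m₂ - 1) × Fin d))
    (hXY : FollowsAC2 m₁ m₂ d Lf ε β X Y)
    (jb : ℕ) (hjb2 : 2 ≤ jb) (hjbd : jb ≤ d)
    (t : ℕ) (ht : (t : ℝ) ≤ 1 + (3 * m₁ * m₂ : ℝ) * ((jb : ℝ) - 2) / 3) :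
    (∀ i, 1 ≤ i → i ≤ 3 * m₁ * m₂ → suppSub (blkN (X t) i) (jb - 1)) ∧
    (∀ j, 1 ≤ j → j ≤ 3 * m₂ - 1 → suppSub (blkN (Y t) j) (jb - 1)) := by
  obtain ⟨hX0, hY0, hstep⟩ := hXY
  have hβ0 : 0 ≤ β := by
    have hs : 0 ≤ sNorm (Amat m₁ m₂ d Lf) := by unfold sNorm; exact norm_nonneg _
    have hpi := Real.pi_pos
    nlinarith [Real.sqrt_nonneg (3 * m₁ * m₂ : ℝ), hε0,
      mul_nonneg (mul_nonneg (by nlinarith : (0:ℝ) ≤ 50 * π + 1 + sNorm (Amat m₁ m₂ d Lf))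
        (Real.sqrt_nonneg (3 * m₁ * m₂ : ℝ))) hε0.le]
  have hβnn : 0 ≤ β / ((3*m₁*m₂ : ℕ) * Lf) := by
    apply div_nonneg hβ0
    positivity
  -- main invariant
  have main : ∀ t : ℕ,
      (X t ∈ zeroOn (fun a : Fin (3*m₁*m₂) × Fin d =>
        Tf (m₁*m₂) (a.1.val+1) (a.2.val+1) ≤ t)) ∧
      (Y t ∈ zeroOn (fun b : Fin (3*m₂-1) × Fin d =>
        min (Tf (m₁*m₂) ((b.1.val+1)*m₁) (b.2.val+1))
          (Tf (m₁*m₂) ((b.1.val+1)*m₁+1) (b.2.val+1)) + 1 ≤ t)) := by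
    intro t
    induction t using Nat.strong_induction_on with
    | _ t IH =>
      match t with
      | 0 =>
        constructor
        · rw [hX0]; exact Submodule.zero_mem _
        · rw [hY0]; exact Submodule.zero_mem _
      | Nat.succ t' =>
        set t := t' + 1 with htdef
        obtain ⟨hXt, η, hη, ξ, hξ, p, hprox, hYt⟩ := hstep t (by omega)
        constructor
        · -- X part
          refine Submodule.span_le.mpr ?_ hXt
          intro v hv
          simp only [Set.mem_iUnion, Set.mem_insert_iff, Set.mem_singleton_iff] at hv
          obtain ⟨s, hs, hv⟩ := hv
          have hst : s < t := hs
          rcases hv with rfl | rfl | rfl | rfl | rfl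
          · -- X s
            intro a ha
            by_contra hne
            exact ha (le_trans (zeroOn_ne (IH s hst).1 hne) (by omega))
          · -- gradient
            rintro ⟨i, l⟩ ha
            replace ha : ¬ (Tf (m₁*m₂) (i.val+1) (l.val+1) ≤ t) := ha
            by_contra hne
            apply ha
            by_cases hl0 : l.val = 0
            · have e0 : l.val + 1 = 1 := by omega
              rw [e0, Tf_one]
              omega
            · have hl1 : 1 ≤ l.val := by omega
              by_cases hz : X s (i, l) ≠ 0
              · have h1 : Tf (m₁*m₂) (i.val+1) (l.val+1) ≤ s :=
                  zeroOn_ne (IH s hst).1 hz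
                omega
              · push_neg at hz
                have hlprev : l.val - 1 < d := by have := l.isLt; omega
                by_cases hpp : pat (m₁*m₂) (i.val+1) (l.val+1)
                    ∧ X s (i, ⟨l.val-1, hlprev⟩) ≠ 0
                · have h1 : Tf (m₁*m₂) (i.val+1) ((⟨l.val-1, hlprev⟩ : Fin d).val + 1) ≤ s :=
                    zeroOn_ne (IH s hst).1 hpp.2
                  have h2 : Tf (m₁*m₂) (i.val+1) (l.val+1) ≤ Tf (m₁*m₂) (i.val+1) l.val + 1 := by
                    have := Tf_adv (m₁*m₂) (i.val+1) (l.val+1) (by omega) hpp.1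
                    simpa using this
                  have h3 : (⟨l.val-1, hlprev⟩ : Fin d).val + 1 = l.val := by simp; omega
                  rw [h3] at h1
                  omega
                · exfalso
                  apply hne
                  apply grad_f0_zero m₁ m₂ d (by omega) (by omega) Lf ε (X s) i l hl1 hz
                  by_cases hpat : pat (m₁*m₂) (i.val+1) (l.val+1)
                  · left
                    intro h'
                    by_contra hne2
                    exact hpp ⟨hpat, hne2⟩
                  · right; exact hpat
          · -- AᵀA
            rintro ⟨i, l⟩ ha
            replace ha : ¬ (Tf (m₁*m₂) (i.val+1) (l.val+1) ≤ t) := ha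
            by_contra hne
            apply ha
            obtain ⟨i', hdist, hv'⟩ := supp_ATA _ _ _ hne
            have h1 : Tf (m₁*m₂) (i'.val+1) (l.val+1) ≤ s := zeroOn_ne (IH s hst).1 hv'
            have h2 := Tf_lip (m₁*m₂) (i.val+1) (i'.val+1) (l.val+1) (by omega)
            omega
          · -- ĀᵀĀ
            rintro ⟨i, l⟩ ha
            replace ha : ¬ (Tf (m₁*m₂) (i.val+1) (l.val+1) ≤ t) := ha
            by_contra hne
            apply ha
            obtain ⟨i', hdist, hv'⟩ := supp_ABarTABar _ _ _ hne
            have h1 : Tf (m₁*m₂) (i'.val+1) (l.val+1) ≤ s := zeroOn_ne (IH s hst).1 hv'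
            have h2 := Tf_lip (m₁*m₂) (i.val+1) (i'.val+1) (l.val+1) (by omega)
            omega
          · -- Āᵀ Y s
            rintro ⟨i, l⟩ ha
            replace ha : ¬ (Tf (m₁*m₂) (i.val+1) (l.val+1) ≤ t) := ha
            by_contra hne
            apply ha
            obtain ⟨k, hk, hy⟩ := supp_ABarT _ _ _ hne
            have h1 : min (Tf (m₁*m₂) ((k.val+1)*m₁) (l.val+1))
                (Tf (m₁*m₂) ((k.val+1)*m₁+1) (l.val+1)) + 1 ≤ s :=
              zeroOn_ne (IH s hst).2 hy
            have h2 := Tf_lip (m₁*m₂) ((k.val+1)*m₁) ((k.val+1)*m₁+1) (l.val+1) (by omega)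
            have h3 := Tf_lip (m₁*m₂) ((k.val+1)*m₁+1) ((k.val+1)*m₁) (l.val+1) (by omega)
            rcases hk with hk | hk
            · rw [hk]; omega
            · rw [show i.val + 1 = (k.val+1)*m₁ + 1 by omega]; omega
        · -- Y part
          have hξmem : ξ ∈ zeroOn (fun b : Fin (3*m₂-1) × Fin d =>
              min (Tf (m₁*m₂) ((b.1.val+1)*m₁) (b.2.val+1))
                (Tf (m₁*m₂) ((b.1.val+1)*m₁+1) (b.2.val+1)) + 1 ≤ t) := by
            refine Submodule.span_le.mpr ?_ hξ
            intro v hv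
            simp only [Set.mem_iUnion, Set.mem_insert_iff, Set.mem_singleton_iff] at hv
            obtain ⟨s, hs, hv⟩ := hv
            have hst : s < t := hs
            rcases hv with rfl | rfl | rfl
            · intro b hb
              by_contra hne
              exact hb (le_trans (zeroOn_ne (IH s hst).2 hne) (by omega))
            · rintro ⟨k, a⟩ hb
              replace hb : ¬ (min (Tf (m₁*m₂) ((k.val+1)*m₁) (a.val+1))
                  (Tf (m₁*m₂) ((k.val+1)*m₁+1) (a.val+1)) + 1 ≤ t) := hb
              by_contra hne
              apply hb
              have hy := supp_ABarABarT hm₁ _ _ _ hne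
              have h1 : min (Tf (m₁*m₂) ((k.val+1)*m₁) (a.val+1))
                  (Tf (m₁*m₂) ((k.val+1)*m₁+1) (a.val+1)) + 1 ≤ s :=
                zeroOn_ne (IH s hst).2 hy
              omega
            · rintro ⟨k, a⟩ hb
              replace hb : ¬ (min (Tf (m₁*m₂) ((k.val+1)*m₁) (a.val+1))
                  (Tf (m₁*m₂) ((k.val+1)*m₁+1) (a.val+1)) + 1 ≤ t) := hb
              by_contra hne
              apply hb
              obtain ⟨j, hj, hx⟩ := supp_ABar _ _ _ hne
              have h1 : Tf (m₁*m₂) (j.val+1) (a.val+1) ≤ s := zeroOn_ne (IH s hst).1 hx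
              rcases hj with hj | hj
              · rw [hj] at h1; omega
              · rw [show j.val + 1 = (k.val+1)*m₁ + 1 by omega] at h1; omega
          have hpmem : p ∈ zeroOn (fun b : Fin (3*m₂-1) × Fin d =>
              min (Tf (m₁*m₂) ((b.1.val+1)*m₁) (b.2.val+1))
                (Tf (m₁*m₂) ((b.1.val+1)*m₁+1) (b.2.val+1)) + 1 ≤ t) := by
            intro b hb
            exact prox_supp hβnn hη ξ p hprox b (hξmem b hb)
          refine Submodule.span_le.mpr ?_ hYt
          intro v hv
          simp only [Set.mem_insert_iff, Set.mem_singleton_iff] at hv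
          rcases hv with rfl | rfl
          · exact hξmem
          · exact hpmem
  -- final assembly
  have htn : t ≤ 1 + (m₁*m₂) * (jb-2) := by
    have hcast : ((1 + m₁*m₂*(jb-2) : ℕ) : ℝ) = 1 + (3*m₁*m₂ : ℝ) * ((jb:ℝ) - 2) / 3 := by
      push_cast [Nat.cast_sub hjb2]
      ring
    rw [← hcast] at ht
    exact_mod_cast ht
  constructor
  · intro i hi1 hi2 j hne
    have hcond : 1 ≤ i ∧ i - 1 < 3*m₁*m₂ := ⟨hi1, by omega⟩
    have hne' : X t (⟨i-1, hcond.2⟩, j) ≠ 0 := by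
      simp only [blkN, dif_pos hcond] at hne
      exact hne
    have h1 : Tf (m₁*m₂) ((i-1)+1) (j.val+1) ≤ t := zeroOn_ne (main t).1 hne'
    by_contra hc
    have hjk : jb ≤ j.val + 1 := by omega
    have h2 := Tf_lb (m₁*m₂) ((i-1)+1) (j.val+1) (by omega)
    have h3 : (m₁*m₂) * (jb-2) ≤ (m₁*m₂) * (j.val+1-2) := Nat.mul_le_mul_left _ (by omega)
    omega
  · intro j hj1 hj2 l hne
    have hcond : 1 ≤ j ∧ j - 1 < 3*m₂-1 := ⟨hj1, by omega⟩
    have hne' : Y t (⟨j-1, hcond.2⟩, l) ≠ 0 := by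
      simp only [blkN, dif_pos hcond] at hne
      exact hne
    have h1 : min (Tf (m₁*m₂) (((j-1)+1)*m₁) (l.val+1))
        (Tf (m₁*m₂) (((j-1)+1)*m₁+1) (l.val+1)) + 1 ≤ t := zeroOn_ne (main t).2 hne'
    by_contra hc
    have hjk : jb ≤ l.val + 1 := by omega
    have h2 := Tf_lb (m₁*m₂) (((j-1)+1)*m₁) (l.val+1) (by omega)
    have h3 := Tf_lb (m₁*m₂) (((j-1)+1)*m₁+1) (l.val+1) (by omega)
    have h4 : (m₁*m₂) * (jb-2) ≤ (m₁*m₂) * (l.val+1-2) := Nat.mul_le_mul_left _ (by omega)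
    omega

end
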